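/- If L is even, ρ is L/2-periodic, x has non-vanishing DFT with |（Fx)[k]| = 1 for all k, and each period of ρ has no repeated values, then x and R_{L/2}x are orthogonal eigenvectors of M² = C_x D_ρ C_x^T sharing an eigenvalue, and any eigenvector u of M² in their common eigenspace that is orthogonal to R_{L/2}u must be a scalar multiple of x or of R_{L/2}x. -/

import Mathlib

/-!
Since `|𝓕 x| = 1`, the autocorrelation of `x` is the Dirac delta at `0`, i.e. the circulant `C_x`
is orthogonal. Hence `M² = C_x D_ρ C_xᵀ` has the orthonormal eigenbasis of shifts `R_t x` with
eigenvalues `ρ t`, and the hypotheses on `ρ` say that `ρ t = ρ 0` only for `t = 0` and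
`t = L/2`. So an eigenvector `u` for `ρ 0` is `a x + b R_{L/2} x`, and since `R_{L/2}` is an
involution with `⟨x, R_{L/2} x⟩ = 0`, we get `⟨u, R_{L/2} u⟩ = 2ab`.
-/

open Matrix

/-- The discrete Fourier transform of a real signal. -/
noncomputable def dftR {L : ℕ} [NeZero L] (x : ZMod L → ℝ) (k : ZMod L) : ℂ :=
  ∑ i : ZMod L, (x i : ℂ) *
    Complex.exp (-(2 * (Real.pi : ℂ) * Complex.I * (k.val : ℂ) * (i.val : ℂ)) / (L : ℂ))

open Finset ComplexConjugate
open scoped ZMod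

namespace ZMod

variable {N : ℕ} [NeZero N]

lemma dft_sum_mul_conj_sub (Φ : ZMod N → ℂ) (k : ZMod N) :
    𝓕 (fun ℓ => ∑ i, Φ i * conj (Φ (i - ℓ))) k = 𝓕 Φ k * conj (𝓕 Φ k) := by
  simp only [dft_apply, smul_eq_mul, map_sum, map_mul, ← AddChar.map_neg_eq_conj, neg_neg,
    mul_sum, sum_mul]
  rw [sum_comm]
  conv_rhs => rw [sum_comm]
  refine sum_congr rfl fun i _ => Fintype.sum_equiv (Equiv.subLeft i) _ _ fun ℓ => ?_
  rw [Equiv.subLeft_apply, show -(ℓ * k) = -(i * k) + (i - ℓ) * k by ring,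
    AddChar.map_add_eq_mul]
  ring

lemma sum_mul_conj_sub_eq_single_of_norm_dft_eq_one {Φ : ZMod N → ℂ}
    (h : ∀ k, ‖𝓕 Φ k‖ = 1) :
    (fun ℓ => ∑ i, Φ i * conj (Φ (i - ℓ))) = Pi.single 0 1 := by
  refine dft.injective (funext fun k => ?_)
  rw [dft_sum_mul_conj_sub, Complex.mul_conj, Complex.normSq_eq_norm_sq, h]
  simp [dft_apply, Pi.single_apply]

lemma stdAddChar_neg_mul (i k : ZMod N) :
    stdAddChar (-(i * k)) =
      Complex.exp (-(2 * Real.pi * Complex.I * k.val * i.val) / N) := by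
  rw [show -(i * k) = Int.cast (R := ZMod N) (-(i.val * k.val)) by push_cast; simp,
    stdAddChar_coe]
  push_cast
  ring_nf

end ZMod

lemma dftR_eq_dft {L : ℕ} [NeZero L] (x : ZMod L → ℝ) (k : ZMod L) :
    dftR x k = 𝓕 (fun i => (x i : ℂ)) k := by
  refine sum_congr rfl fun i _ => ?_
  rw [smul_eq_mul, ZMod.stdAddChar_neg_mul, mul_comm]

lemma sum_mul_sub_eq_single_of_norm_dftR_eq_one {L : ℕ} [NeZero L] {x : ZMod L → ℝ}
    (hx : ∀ k, ‖dftR x k‖ = 1) : (fun ℓ => ∑ i, x i * x (i - ℓ)) = Pi.single 0 1 := by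
  have hΦ := ZMod.sum_mul_conj_sub_eq_single_of_norm_dft_eq_one (Φ := fun i => (x i : ℂ))
    fun k => by rw [← dftR_eq_dft, hx]
  ext ℓ
  have hℓ := congrFun hΦ ℓ
  simp only [Complex.conj_ofReal] at hℓ
  apply Complex.ofReal_injective
  push_cast
  rw [hℓ]
  by_cases hℓ0 : ℓ = 0 <;> simp [hℓ0]

namespace Matrix

section Spectral

variable {n R : Type*} [Fintype n] [DecidableEq n] [CommRing R] {C : Matrix n n R}

lemma mul_diagonal_mul_transpose_mulVec_col (hC : Cᵀ * C = 1) (d : n → R) (t : n) :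
    (C * diagonal d * Cᵀ) *ᵥ C.col t = d t • C.col t := by
  rw [← mulVec_single_one, mulVec_mulVec, Matrix.mul_assoc, hC, Matrix.mul_one,
    mulVec_single_one]
  ext i
  simp [mul_diagonal, mul_comm]

lemma diagonal_mulVec_transpose_mulVec (hC : Cᵀ * C = 1) (d : n → R) {u : n → R} {μ : R}
    (hu : (C * diagonal d * Cᵀ) *ᵥ u = μ • u) :
    diagonal d *ᵥ (Cᵀ *ᵥ u) = μ • (Cᵀ *ᵥ u) := by
  have : Cᵀ *ᵥ ((C * diagonal d * Cᵀ) *ᵥ u) = Cᵀ *ᵥ (μ • u) := by rw [hu]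
  rwa [mulVec_mulVec, mulVec_smul, ← Matrix.mul_assoc, ← Matrix.mul_assoc, hC, Matrix.one_mul,
    ← mulVec_mulVec] at this

end Spectral

section Circulant

variable {G R : Type*} [AddCommGroup G] [Fintype G] [DecidableEq G] [CommRing R] {x : G → R}

lemma circulant_mul_diagonal_mul_transpose (x ρ : G → R) :
    circulant x * diagonal ρ * (circulant x)ᵀ =
      Matrix.of fun i j => ∑ s, ρ s * (x (i - s) * x (j - s)) := by
  ext i j
  rw [mul_apply]
  simp only [mul_diagonal, transpose_apply, circulant_apply, of_apply]
  exact sum_congr rfl fun s _ => by ring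

lemma transpose_circulant_mul_self_eq_one
    (hx : (fun ℓ => ∑ i, x i * x (i - ℓ)) = Pi.single 0 1) :
    (circulant x)ᵀ * circulant x = 1 := by
  ext s t
  rw [mul_apply, one_apply]
  simp only [transpose_apply, circulant_apply]
  rw [← Fintype.sum_equiv (Equiv.addRight s) (fun i => x i * x (i - (t - s))) _ fun i => by
    simp only [Equiv.coe_addRight, add_sub_cancel_right]; congr 2; abel]
  simp only [congrFun hx (t - s), Pi.single_apply, sub_eq_zero, eq_comm]

lemma sum_shift_mul_shift (hC : (circulant x)ᵀ * circulant x = 1) (s t : G) :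
    ∑ i, x (i - s) * x (i - t) = if s = t then 1 else 0 := by
  simpa [mul_apply, one_apply] using congrFun₂ hC s t

lemma exists_eq_smul_add_smul_shift [IsDomain R] (hC : (circulant x)ᵀ * circulant x = 1)
    {ρ : G → R} {e : G} (he : e ≠ 0) (hρ : ∀ t, ρ t = ρ 0 → t = 0 ∨ t = e)
    {u : G → R}
    (hu : (circulant x * diagonal ρ * (circulant x)ᵀ) *ᵥ u = ρ 0 • u) :
    ∃ a b : R, u = a • x + b • fun i => x (i - e) := by
  set c := (circulant x)ᵀ *ᵥ u
  have hc : ∀ t, t ≠ 0 ∧ t ≠ e → c t = 0 := by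
    rintro t ⟨ht0, hte⟩
    have hct : (ρ t - ρ 0) * c t = 0 := by
      have := congrFun (diagonal_mulVec_transpose_mulVec hC ρ hu) t
      rw [mulVec_diagonal, Pi.smul_apply, smul_eq_mul] at this
      linear_combination this
    refine (mul_eq_zero.mp hct).resolve_left fun h => ?_
    rcases hρ t (sub_eq_zero.mp h) with h | h <;> contradiction
  refine ⟨c 0, c e, ?_⟩
  calc u = circulant x *ᵥ c := by
        rw [mulVec_mulVec, mul_eq_one_comm.mp hC, one_mulVec]
    _ = c 0 • x + c e • fun i => x (i - e) := by
        ext i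
        rw [mulVec, dotProduct,
          Fintype.sum_eq_add 0 e he.symm fun t ht => by rw [hc t ht, mul_zero]]
        simp [circulant_apply, mul_comm]

lemma sum_mul_shift_of_eq_smul_add_smul_shift (hC : (circulant x)ᵀ * circulant x = 1) {e : G}
    (he : e ≠ 0) (he2 : e + e = 0) {u : G → R} {a b : R}
    (hu : u = a • x + b • fun i => x (i - e)) :
    ∑ i, u i * u (i - e) = 2 * a * b := by
  have hu' : ∀ i, u i * u (i - e) =
      a * a * (x (i - 0) * x (i - e)) + a * b * (x (i - 0) * x (i - 0)) +
        a * b * (x (i - e) * x (i - e)) + b * b * (x (i - e) * x (i - 0)) := fun i => by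
    simp only [hu, Pi.add_apply, Pi.smul_apply, smul_eq_mul]
    rw [sub_sub, he2, sub_zero]
    ring
  simp only [hu', sum_add_distrib, ← mul_sum, sum_shift_mul_shift hC, he, he.symm, ↓reduceIte,
    mul_zero, mul_one, zero_add, add_zero]
  ring

end Circulant

end Matrix

namespace ZMod

lemma natCast_half_add_self {L : ℕ} (hL : 2 ∣ L) :
    ((L / 2 : ℕ) : ZMod L) + ((L / 2 : ℕ) : ZMod L) = 0 := by
  rw [← Nat.cast_add, ← two_mul, Nat.mul_div_cancel' hL, natCast_self]

variable {L : ℕ} [NeZero L]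

lemma val_natCast_half : ((L / 2 : ℕ) : ZMod L).val = L / 2 :=
  val_cast_of_lt (Nat.div_lt_self (NeZero.pos L) one_lt_two)

lemma natCast_half_ne_zero (hL : 2 ∣ L) : ((L / 2 : ℕ) : ZMod L) ≠ 0 := fun h => by
  have := congrArg val h
  rw [val_natCast_half, val_zero] at this
  have := NeZero.pos L
  omega

lemma eq_zero_or_eq_half_of_apply_eq_apply_zero {α : Type*} (hL : 2 ∣ L) {ρ : ZMod L → α}
    (hper : ∀ k : ZMod L, ρ (k + ((L / 2 : ℕ) : ZMod L)) = ρ k)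
    (hdist : ∀ k k' : ZMod L, k.val < L / 2 → k'.val < L / 2 → k ≠ k' → ρ k ≠ ρ k')
    {t : ZMod L} (ht : ρ t = ρ 0) : t = 0 ∨ t = ((L / 2 : ℕ) : ZMod L) := by
  have h0 : (0 : ZMod L).val < L / 2 := by
    rw [val_zero]
    have := NeZero.pos L
    omega
  by_cases hlt : t.val < L / 2
  · exact .inl (by_contra fun h => hdist t 0 hlt h0 h ht)
  · have hsub : (t - ((L / 2 : ℕ) : ZMod L)).val < L / 2 := by
      rw [val_sub (by rw [val_natCast_half]; omega), val_natCast_half]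
      have := t.val_lt
      omega
    refine .inr (sub_eq_zero.mp (by_contra fun h => hdist _ 0 hsub h0 h ?_))
    rw [← hper, sub_add_cancel, ht]

end ZMod

theorem stmt_9_general (L : ℕ) [NeZero L] (hL : 2 ∣ L) (x ρ : ZMod L → ℝ)
    (hper : ∀ k : ZMod L, ρ (k + ((L / 2 : ℕ) : ZMod L)) = ρ k)
    (hx : ∀ k, ‖dftR x k‖ = 1)
    (hdist : ∀ k k' : ZMod L, k.val < L / 2 → k'.val < L / 2 → k ≠ k' → ρ k ≠ ρ k') :
    (∑ i, x i * x (i - ((L / 2 : ℕ) : ZMod L))) = 0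
    ∧ (Matrix.of fun i j : ZMod L => ∑ s, ρ s * (x (i - s) * x (j - s))).mulVec x
        = ρ 0 • x
    ∧ (Matrix.of fun i j : ZMod L => ∑ s, ρ s * (x (i - s) * x (j - s))).mulVec
          (fun i => x (i - ((L / 2 : ℕ) : ZMod L)))
        = ρ 0 • (fun i => x (i - ((L / 2 : ℕ) : ZMod L)))
    ∧ ∀ u : ZMod L → ℝ,
        (Matrix.of fun i j : ZMod L => ∑ s, ρ s * (x (i - s) * x (j - s))).mulVec u
            = ρ 0 • u →
        (∑ i, u i * u (i - ((L / 2 : ℕ) : ZMod L))) = 0 →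
        ∃ α : ℝ, u = α • x ∨ u = α • (fun i => x (i - ((L / 2 : ℕ) : ZMod L))) := by
  have hauto := sum_mul_sub_eq_single_of_norm_dftR_eq_one hx
  have hC := transpose_circulant_mul_self_eq_one hauto
  have he := ZMod.natCast_half_ne_zero hL
  set e : ZMod L := ((L / 2 : ℕ) : ZMod L)
  have hρe : ρ e = ρ 0 := by simpa using hper 0
  rw [← circulant_mul_diagonal_mul_transpose x ρ]
  refine ⟨by simpa [he] using congrFun hauto e,
    by simpa [col_apply', circulant_apply] using mul_diagonal_mul_transpose_mulVec_col hC ρ 0,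
    hρe ▸ mul_diagonal_mul_transpose_mulVec_col hC ρ e, fun u hu hu2 => ?_⟩
  obtain ⟨a, b, rfl⟩ := exists_eq_smul_add_smul_shift hC he
    (fun t ht => ZMod.eq_zero_or_eq_half_of_apply_eq_apply_zero hL hper hdist ht) hu
  rw [sum_mul_shift_of_eq_smul_add_smul_shift hC he (ZMod.natCast_half_add_self hL) rfl] at hu2
  rcases mul_eq_zero.mp (by linarith : a * b = 0) with rfl | rfl
  · exact ⟨b, .inr (by simp)⟩
  · exact ⟨a, .inl (by simp)⟩

/-- If `L` is even, `ρ` is `L/2`-periodic, `x` has unit-modulus DFT, and each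
period of `ρ` has no repeated values, then `x` and `R_{L/2} x` are orthogonal
eigenvectors of `M² = C_x D_ρ C_xᵀ` sharing the eigenvalue `ρ[0]`, and any
eigenvector `u` in their common eigenspace that is orthogonal to `R_{L/2} u`
is a scalar multiple of `x` or of `R_{L/2} x`. -/
theorem stmt_9 (L : ℕ) [NeZero L] (hL : 2 ∣ L) (x ρ : ZMod L → ℝ)
    (hρ0 : ∀ s, 0 ≤ ρ s) (hρ1 : ∑ s, ρ s = 1)
    (hper : ∀ k : ZMod L, ρ (k + ((L / 2 : ℕ) : ZMod L)) = ρ k)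
    (hx : ∀ k, ‖dftR x k‖ = 1)
    (hdist : ∀ k k' : ZMod L, k.val < L / 2 → k'.val < L / 2 → k ≠ k' → ρ k ≠ ρ k') :
    (∑ i, x i * x (i - ((L / 2 : ℕ) : ZMod L))) = 0
    ∧ (Matrix.of fun i j : ZMod L => ∑ s, ρ s * (x (i - s) * x (j - s))).mulVec x
        = ρ 0 • x
    ∧ (Matrix.of fun i j : ZMod L => ∑ s, ρ s * (x (i - s) * x (j - s))).mulVec
          (fun i => x (i - ((L / 2 : ℕ) : ZMod L)))
        = ρ 0 • (fun i => x (i - ((L / 2 : ℕ) : ZMod L)))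
    ∧ ∀ u : ZMod L → ℝ,
        (Matrix.of fun i j : ZMod L => ∑ s, ρ s * (x (i - s) * x (j - s))).mulVec u
            = ρ 0 • u →
        (∑ i, u i * u (i - ((L / 2 : ℕ) : ZMod L))) = 0 →
        ∃ α : ℝ, u = α • x ∨ u = α • (fun i => x (i - ((L / 2 : ℕ) : ZMod L))) :=
  stmt_9_general L hL x ρ hper hx hdist
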